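/- arXiv:2204.08392 — 10 statements merged into one kernel-verified Lean document; each statement's English description precedes it below -/
import Mathlib

section
/- Let K be a field of characteristic p > 0 and let f: Z -> K^n be a c-quasihomomorphism. Then for all x in Z, w_H(f(x) - x*f(1)) <= 2*(p-1)*c. -/
/-- Hamming weight: number of nonzero coordinates. -/
noncomputable def wH {Q : Type*} [Zero Q] {n : ℕ} (v : Fin n → Q) : ℕ :=
  Nat.card {i : Fin n // v i ≠ 0}

lemma wH_eq_ncard {Q : Type*} [Zero Q] {n : ℕ} (v : Fin n → Q) :
    wH v = Set.ncard {i : Fin n | v i ≠ 0} := rfl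

lemma wH_add_le {Q : Type*} [AddZeroClass Q] {n : ℕ} (u v : Fin n → Q) :
    wH (u + v) ≤ wH u + wH v := by
  rw [wH_eq_ncard, wH_eq_ncard, wH_eq_ncard]
  refine le_trans (Set.ncard_le_ncard ?_ (Set.toFinite _)) (Set.ncard_union_le _ _)
  intro i hi
  by_contra hcon
  simp only [Set.mem_union, Set.mem_setOf_eq] at hcon
  push_neg at hcon
  exact hi (by simp [hcon.1, hcon.2])

lemma wH_zero {Q : Type*} [Zero Q] {n : ℕ} : wH (0 : Fin n → Q) = 0 := by
  rw [wH_eq_ncard]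
  simp

theorem quasihom_char_p {K : Type*} [Field K] (p : ℕ) (hp : 0 < p) [CharP K p]
    {n : ℕ} (c : ℕ) (f : ℤ → Fin n → K)
    (hf : ∀ x y : ℤ, wH (f (x + y) - f x - f y) ≤ c) :
    ∀ x : ℤ, wH (f x - x • f 1) ≤ 2 * (p - 1) * c := by
  intro x
  set h : ℤ → Fin n → K := fun z => f z - z • f 1 with hh
  have hD : ∀ a b : ℤ, h (a + b) - h a - h b = f (a + b) - f a - f b := by
    intro a b
    simp only [hh, add_zsmul]
    abel
  have hc : ∀ a b : ℤ, wH (h (a + b) - h a - h b) ≤ c := fun a b => (hD a b) ▸ hf a b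
  have h1 : h 1 = 0 := by
    show f 1 - (1 : ℤ) • f 1 = 0
    rw [one_zsmul, sub_self]
  -- telescoping along multiples of m
  have key1 : ∀ (k : ℕ) (m : ℤ), wH (h (((k : ℤ) + 1) * m) - ((k : ℤ) + 1) • h m) ≤ k * c := by
    intro k
    induction k with
    | zero => intro m; simp [wH_zero]
    | succ k ih =>
      intro m
      push_cast
      have heq : h (((k : ℤ) + 1 + 1) * m) - ((k : ℤ) + 1 + 1) • h m
          = (h (((k : ℤ) + 1) * m) - ((k : ℤ) + 1) • h m)
            + (h ((((k : ℤ) + 1) * m) + m) - h (((k : ℤ) + 1) * m) - h m) := by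
        have harg : ((k : ℤ) + 1 + 1) * m = ((k : ℤ) + 1) * m + m := by ring
        rw [harg]
        have hsm : ((k : ℤ) + 1 + 1) • h m = ((k : ℤ) + 1) • h m + h m := by
          rw [add_zsmul, one_zsmul]
        rw [hsm]; abel
      rw [heq]
      calc wH _ ≤ wH (h (((k : ℤ) + 1) * m) - ((k : ℤ) + 1) • h m)
            + wH (h ((((k : ℤ) + 1) * m) + m) - h (((k : ℤ) + 1) * m) - h m) := wH_add_le _ _
        _ ≤ k * c + c := Nat.add_le_add (ih m) (hc _ _)
        _ = (k + 1) * c := by ring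
  -- weight at multiples of p
  have keyp : ∀ m : ℤ, wH (h ((p : ℤ) * m)) ≤ (p - 1) * c := by
    intro m
    obtain ⟨q, hq'⟩ : ∃ q, p = q + 1 := ⟨p - 1, by omega⟩
    have hz : ((p : ℤ)) • h m = 0 := by
      funext i
      rw [Pi.smul_apply, zsmul_eq_mul, Int.cast_natCast, CharP.cast_eq_zero, zero_mul,
        Pi.zero_apply]
    have hqz : ((q : ℤ) + 1) = (p : ℤ) := by rw [hq']; push_cast; ring
    have := key1 q m
    rw [hqz, hz, sub_zero] at this
    have hpq : p - 1 = q := by omega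
    rw [hpq]
    exact this
  -- steps of size 1
  have key2 : ∀ (r : ℕ) (a : ℤ), wH (h (a + r) - h a) ≤ r * c := by
    intro r
    induction r with
    | zero => intro a; simp [wH_zero]
    | succ r ih =>
      intro a
      have heq : h (a + (r + 1 : ℕ)) - h a
          = (h (a + r) - h a) + (h ((a + r) + 1) - h (a + r) - h 1) := by
        rw [h1]
        have : a + ((r + 1 : ℕ) : ℤ) = (a + r) + 1 := by push_cast; ring
        rw [this]; abel
      rw [heq]
      calc wH _ ≤ wH (h (a + r) - h a) + wH (h ((a + r) + 1) - h (a + r) - h 1) :=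
            wH_add_le _ _
        _ ≤ r * c + c := Nat.add_le_add (ih a) (hc _ _)
        _ = (r + 1) * c := by ring
  -- put it together
  have hpz : (p : ℤ) ≠ 0 := by exact_mod_cast hp.ne'
  set m := x / p with hm
  set r := (x % p).toNat with hr
  have hrange : (0 : ℤ) ≤ x % p := Int.emod_nonneg x hpz
  have hlt : x % p < p := Int.emod_lt_of_pos x (by exact_mod_cast hp)
  have hx : x = (p : ℤ) * m + r := by
    rw [hr, Int.toNat_of_nonneg hrange, hm]
    exact (Int.mul_ediv_add_emod x p).symm
  have hrle : r ≤ p - 1 := by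
    have h1' : (r : ℤ) < p := by rw [hr, Int.toNat_of_nonneg hrange]; exact hlt
    have h2' : r < p := by exact_mod_cast h1'
    omega
  have hsplit : h x = (h ((p : ℤ) * m + r) - h ((p : ℤ) * m)) + h ((p : ℤ) * m) := by
    rw [← hx]; abel
  have hgoal : wH (h x) ≤ 2 * (p - 1) * c := by
    rw [hsplit]
    calc wH _ ≤ wH (h ((p : ℤ) * m + r) - h ((p : ℤ) * m)) + wH (h ((p : ℤ) * m)) :=
          wH_add_le _ _
      _ ≤ r * c + (p - 1) * c := Nat.add_le_add (key2 r _) (keyp m)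
      _ ≤ (p - 1) * c + (p - 1) * c := Nat.add_le_add_right (Nat.mul_le_mul_right c hrle) _
      _ = 2 * (p - 1) * c := by ring
  exact hgoal
end

section
/- Let A be a finite abelian group of order a, H a torsion-free abelian group, q in [0,1], and f: A -> H a map whose zero set Z(f) = {b in A : f(b) = 0} has cardinality at most q*a. Then the problem set P(f) = {(b,c) in A x A : f(b+c) != f(b) + f(c)} has cardinality at least ((a - q*a)/2) * ((a - q*a)/2 + 1). -/
/-!
The values of `f` span a finitely generated torsion-free, hence free, subgroup of `H`; through a
basis it embeds into `ℤᵏ` with the lexicographic order, a linearly ordered group, so we may assume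
`H` is linearly ordered. Let `P` be the set of points where `f` is positive, `p = #P`. If
`(b, c) ∈ P × P` is additive then `f b < f (b + c)`, so `(b, c) ↦ (b, b + c)` injects the additive
pairs into the pairs of `P` with strictly increasing values, of which there are at most
`(p² - p) / 2`. Hence `P × P` contains at least `p (p + 1) / 2` problem pairs; the same holds for
the `m` points where `f` is negative, and `p (p + 1) / 2 + m (m + 1) / 2 ≥ (n / 2) (n / 2 + 1)` for
`n = p + m ≥ a - q a`.
-/

open Finset

theorem two_mul_card_filter_lt_le_card_offDiag {α β : Type*} [DecidableEq α] [LinearOrder β]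
    (s : Finset α) (g : α → β) :
    2 * #{x ∈ s ×ˢ s | g x.1 < g x.2} ≤ #s.offDiag := by
  set S := {x ∈ s ×ˢ s | g x.1 < g x.2}
  set swap := (Equiv.prodComm α α).toEmbedding
  have hdisj : Disjoint S (S.map swap) := by
    simp only [S, swap, disjoint_left, mem_map_equiv, mem_filter]
    exact fun x hx hx' => lt_asymm hx.2 hx'.2
  have hunion := card_union_of_disjoint hdisj
  rw [card_map] at hunion
  rw [two_mul, ← hunion]
  refine card_le_card fun x hx => ?_
  simp only [S, swap, mem_union, mem_map_equiv, mem_filter, mem_product, mem_offDiag] at hx ⊢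
  rcases hx with ⟨⟨h1, h2⟩, hlt⟩ | ⟨⟨h2, h1⟩, hlt⟩
  · exact ⟨h1, h2, fun h => hlt.ne (congrArg g h)⟩
  · exact ⟨h1, h2, fun h => hlt.ne' (congrArg g h)⟩

section
variable {A L : Type*} [Add A] [IsLeftCancelAdd A] [DecidableEq A]
  [AddCommGroup L] [LinearOrder L] [IsOrderedAddMonoid L]

theorem card_mul_succ_le_two_mul_card_nonadditive (F : A → L) (s : Finset A)
    (hs : ∀ b, b ∈ s ↔ 0 < F b) :
    #s * (#s + 1) ≤ 2 * #{x ∈ s ×ˢ s | F (x.1 + x.2) ≠ F x.1 + F x.2} := by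
  have hadd : #{x ∈ s ×ˢ s | F (x.1 + x.2) = F x.1 + F x.2} ≤ #{x ∈ s ×ˢ s | F x.1 < F x.2} := by
    refine card_le_card_of_injOn (fun x => (x.1, x.1 + x.2)) (fun x hx => ?_) ?_
    · simp only [coe_filter, mem_product, hs, Set.mem_ofPred_eq] at hx ⊢
      obtain ⟨⟨h1, h2⟩, heq⟩ := hx
      rw [heq]
      exact ⟨⟨h1, add_pos h1 h2⟩, lt_add_of_pos_right _ h2⟩
    · rintro ⟨b, c⟩ - ⟨b', c'⟩ - h
      simp only [Prod.mk.injEq] at h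
      obtain ⟨rfl, h⟩ := h
      simp [add_left_cancel h]
  have hsplit := card_filter_add_card_filter_not (s := s ×ˢ s)
    (fun x => F (x.1 + x.2) = F x.1 + F x.2)
  have hlt := two_mul_card_filter_lt_le_card_offDiag s F
  rw [offDiag_card] at hlt
  rw [card_product] at hsplit
  have hsq := Nat.sub_add_cancel (Nat.le_mul_self #s)
  rw [Nat.mul_succ]
  simp only [ne_eq]
  omega

theorem card_ne_zero_mul_le_four_mul_card_nonadditive [Fintype A] (F : A → L) :
    #{b | F b ≠ 0} * (#{b | F b ≠ 0} + 2) ≤ 4 * #{x : A × A | F (x.1 + x.2) ≠ F x.1 + F x.2} := by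
  set s : Finset A := {b | 0 < F b}
  set t : Finset A := {b | F b < 0}
  have hs := card_mul_succ_le_two_mul_card_nonadditive F s (by simp [s])
  have ht := card_mul_succ_le_two_mul_card_nonadditive (-F) t (by simp [t])
  simp only [Pi.neg_apply, ← neg_add, ne_eq, neg_inj] at ht
  simp only [← ne_eq] at ht
  have hne : #{b | F b ≠ 0} = #s + #t := by
    rw [← card_union_of_disjoint (disjoint_filter.2 fun b _ h h' => lt_asymm h h'), ← filter_or]
    simp only [ne_iff_lt_or_gt, or_comm]
  have hst : #{x ∈ s ×ˢ s | F (x.1 + x.2) ≠ F x.1 + F x.2} +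
      #{x ∈ t ×ˢ t | F (x.1 + x.2) ≠ F x.1 + F x.2} ≤
      #{x : A × A | F (x.1 + x.2) ≠ F x.1 + F x.2} := by
    rw [← card_union_of_disjoint]
    · exact card_le_card (union_subset (filter_subset_filter _ (subset_univ _))
        (filter_subset_filter _ (subset_univ _)))
    · refine disjoint_filter_filter (disjoint_product.2 (Or.inl ?_))
      exact disjoint_filter.2 fun b _ h h' => lt_asymm h h'
  rw [hne]
  nlinarith [two_mul_le_add_sq #s #t]
end

theorem exists_lex_factorization {ι H : Type*} [Finite ι] [AddCommGroup H]
    [Module.IsTorsionFree ℤ H] (f : ι → H) :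
    ∃ (k : ℕ) (F : ι → Lex (Fin k → ℤ)) (φ : Lex (Fin k → ℤ) →ₗ[ℤ] H),
      Function.Injective φ ∧ φ ∘ F = f := by
  set M := Submodule.span ℤ (Set.range f)
  have : Module.Finite ℤ M := Module.Finite.span_of_finite ℤ (Set.finite_range f)
  let e : M ≃ₗ[ℤ] Lex (Fin _ → ℤ) :=
    (Module.finBasis ℤ M).equivFun.trans (toLexLinearEquiv ℤ _)
  refine ⟨_, fun i => e ⟨f i, Submodule.subset_span ⟨i, rfl⟩⟩, M.subtype ∘ₗ e.symm.toLinearMap,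
    M.injective_subtype.comp e.symm.injective, ?_⟩
  ext i
  simp

theorem almost_hom_almost_zero_general {A H : Type*} [AddCommGroup A] [Fintype A]
    [AddCommGroup H]
    (htf : ∀ (m : ℤ) (h : H), m ≠ 0 → m • h = 0 → h = 0)
    (a : ℕ) (ha : Fintype.card A = a)
    (q : ℚ) (hq1 : q ≤ 1)
    (f : A → H)
    (hZ : (Nat.card {b : A // f b = 0} : ℚ) ≤ q * a) :
    ((a - q * a) / 2) * ((a - q * a) / 2 + 1) ≤
      (Nat.card {p : A × A // f (p.1 + p.2) ≠ f p.1 + f p.2} : ℚ) := by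
  classical
  have : Module.IsTorsionFree ℤ H :=
    .of_smul_eq_zero fun m h hmh => or_iff_not_imp_left.2 fun hm => htf m h hm hmh
  obtain ⟨k, F, φ, hφ, rfl⟩ := exists_lex_factorization f
  simp only [Function.comp_apply, ← map_add, hφ.ne_iff, map_eq_zero_iff φ hφ,
    Nat.card_eq_fintype_card, Fintype.card_subtype] at hZ ⊢
  have hcount := card_ne_zero_mul_le_four_mul_card_nonadditive F
  have hsplit : (#{b | F b = 0} : ℚ) + #{b | F b ≠ 0} = a := by
    rw [← ha, ← card_univ]
    exact_mod_cast card_filter_add_card_filter_not _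
  have hx0 : 0 ≤ (a : ℚ) - q * a := sub_nonneg.2 (mul_le_of_le_one_left a.cast_nonneg hq1)
  have hxn : (a : ℚ) - q * a ≤ #{b | F b ≠ 0} := by linarith
  have hcountq : (#{b | F b ≠ 0} : ℚ) * (#{b | F b ≠ 0} + 2) ≤
      4 * #{x : A × A | F (x.1 + x.2) ≠ F x.1 + F x.2} := by
    exact_mod_cast hcount
  nlinarith [mul_le_mul hxn hxn hx0 (Nat.cast_nonneg _)]

theorem almost_hom_almost_zero {A H : Type*} [AddCommGroup A] [Fintype A]
    [AddCommGroup H]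
    (htf : ∀ (m : ℤ) (h : H), m ≠ 0 → m • h = 0 → h = 0)
    (a : ℕ) (ha : Fintype.card A = a)
    (q : ℚ) (hq0 : 0 ≤ q) (hq1 : q ≤ 1)
    (f : A → H)
    (hZ : (Nat.card {b : A // f b = 0} : ℚ) ≤ q * a) :
    ((a - q * a) / 2) * ((a - q * a) / 2 + 1) ≤
      (Nat.card {p : A × A // f (p.1 + p.2) ≠ f p.1 + f p.2} : ℚ) :=
  almost_hom_almost_zero_general htf a ha q hq1 f hZ
end

section
/- Let f: Z/aZ -> Q be a map with values in the rationals. Let B = {b : f(b) > 0}, let lambda_1 > ... > lambda_k > 0 be the distinct positive values of f, set B_i = {b : f(b) = lambda_i} and n_i = |B_i|, n = |B|. Then the problem set P(f) = {(b,c) : f(b+c) != f(b) + f(c)} contains at least n*(n+1)/2 pairs (b,c) with c in B. -/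
/-!
Fix `c` with `f c > 0` and walk backwards from `b` in steps of `c`. While `f (x + c) = f x + f c`
holds along the way, `f` drops by `f c` per step; since `c` has finite order the walk must meet a
pair `(x, c)` of `P(f)`. Sending each `b ∈ B` with `f b ≤ f c` to the first such `x` is injective:
if two of them shared it, one would lie on the other's failure-free backward run at distance at
least one, where `f ≤ f c - f c = 0`. So each `c ∈ B` accounts for at least
`#{b ∈ B | f b ≤ f c}` pairs of `P(f)`, and summing over `c` counts every pair of distinct elements
of `B` at least once and each element of `B` once more.
-/

open Finset

section
variable {G M : Type*} [AddCommGroup G] [AddCommGroup M] {f : G → M} {b c : G}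

lemma apply_sub_nsmul_of_forall_lt {m : ℕ}
    (h : ∀ i < m, f (b - (i + 1) • c + c) = f (b - (i + 1) • c) + f c) :
    f (b - m • c) = f b - m • f c := by
  induction m with
  | zero => simp
  | succ m ih =>
    have hm := h m m.lt_succ_self
    rw [show b - (m + 1) • c + c = b - m • c by rw [succ_nsmul]; abel,
      ih fun i hi => h i (hi.trans m.lt_succ_self)] at hm
    rw [succ_nsmul (f c), ← sub_sub, hm, add_sub_cancel_right]

variable [LinearOrder M] [IsOrderedAddMonoid M]

lemma exists_apply_sub_nsmul_add_ne (hc : 0 < f c) (hfin : IsOfFinAddOrder c) (b : G) :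
    ∃ j : ℕ, f (b - (j + 1) • c + c) ≠ f (b - (j + 1) • c) + f c := by
  by_contra! h
  have hb := apply_sub_nsmul_of_forall_lt (m := addOrderOf c) (b := b) fun i _ => h i
  rw [addOrderOf_nsmul_eq_zero, sub_zero, eq_comm, sub_eq_self] at hb
  exact (nsmul_pos hc hfin.addOrderOf_pos.ne').ne' hb

lemma eq_zero_of_pos_apply_sub_nsmul {m : ℕ} (hc : 0 < f c) (hbc : f b ≤ f c)
    (h : ∀ i < m, f (b - (i + 1) • c + c) = f (b - (i + 1) • c) + f c)
    (hpos : 0 < f (b - m • c)) : m = 0 := by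
  obtain _ | k := m
  · rfl
  rw [apply_sub_nsmul_of_forall_lt h, succ_nsmul, ← sub_sub] at hpos
  exact absurd hpos
    ((sub_le_sub_right (sub_le_self _ (nsmul_nonneg hc.le k)) _).trans (sub_nonpos.2 hbc)).not_gt

lemma card_pos_le_le_card_apply_add_ne [Fintype G] (hc : 0 < f c) :
    #{b | 0 < f b ∧ f b ≤ f c} ≤ #{b | f (b + c) ≠ f b + f c} := by
  classical
  have hex := exists_apply_sub_nsmul_add_ne hc (isOfFinAddOrder_of_finite c)
  let J : G → ℕ := fun b => Nat.find (hex b)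
  have hJ : ∀ b, ∀ i < J b, f (b - (i + 1) • c + c) = f (b - (i + 1) • c) + f c :=
    fun b i hi => not_not.1 (Nat.find_min (hex b) hi)
  have hinj : ∀ b b', 0 < f b → f b ≤ f c → 0 < f b' → J b' ≤ J b →
      b - (J b + 1) • c = b' - (J b' + 1) • c → b = b' := by
    intro b b' hb hbc hb' hle heq
    rw [show J b + 1 = (J b - J b') + (J b' + 1) by omega, add_nsmul, ← sub_sub,
      sub_left_inj] at heq
    have hm := eq_zero_of_pos_apply_sub_nsmul hc hbc
      (fun i hi => hJ b i (hi.trans_le ((J b).sub_le _))) (heq ▸ hb')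
    rw [← heq, hm, zero_smul, sub_zero]
  refine card_le_card_of_injOn (fun b => b - (J b + 1) • c) (fun b _ => ?_) ?_
  · simpa using Nat.find_spec (hex b)
  · intro b hb b' hb' heq
    simp only [coe_filter, mem_univ, true_and, Set.mem_ofPred_eq] at hb hb'
    rcases le_total (J b') (J b) with h | h
    · exact hinj b b' hb.1 hb.2 hb'.1 h heq
    · exact (hinj b' b hb'.1 hb'.2 hb.1 h heq.symm).symm

end

lemma card_mul_card_add_one_le_two_mul_sum_card_le {α β : Type*} [LinearOrder β]
    (s : Finset α) (g : α → β) :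
    #s * (#s + 1) ≤ 2 * ∑ c ∈ s, #{b ∈ s | g b ≤ g c} := by
  classical
  simp only [card_filter]
  calc #s * (#s + 1) = ∑ c ∈ s, ∑ b ∈ s, (1 + if b = c then 1 else 0) := by
        simp [sum_add_distrib, mul_add]
    _ ≤ ∑ c ∈ s, ∑ b ∈ s, ((if g b ≤ g c then 1 else 0) + if g c ≤ g b then 1 else 0) := by
        refine sum_le_sum fun c _ => sum_le_sum fun b _ => ?_
        have := le_total (g b) (g c)
        split_ifs <;> simp_all
    _ = 2 * ∑ c ∈ s, ∑ b ∈ s, if g b ≤ g c then 1 else 0 := by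
        rw [two_mul]
        simp only [sum_add_distrib]
        rw [sum_comm (f := fun c b => if g c ≤ g b then 1 else 0)]

lemma card_filter_prod_eq_sum_card_filter {α β : Type*} [Fintype α] [Fintype β]
    (p : α → β → Prop) (q : β → Prop) [∀ a b, Decidable (p a b)] [DecidablePred q] :
    #{x : α × β | p x.1 x.2 ∧ q x.2} = ∑ c ∈ {c | q c}, #{b | p b c} := by
  simp only [card_filter, sum_filter, Fintype.sum_prod_type_right, ite_and]
  refine sum_congr rfl fun c _ => ?_
  split_ifs <;> simp

theorem card_mul_card_add_one_le_two_mul_card_apply_add_ne {G M : Type*} [AddCommGroup G]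
    [Fintype G] [AddCommGroup M] [LinearOrder M] [IsOrderedAddMonoid M] (f : G → M) :
    #{b | 0 < f b} * (#{b | 0 < f b} + 1) ≤
      2 * #{p : G × G | f (p.1 + p.2) ≠ f p.1 + f p.2 ∧ 0 < f p.2} := by
  calc _ ≤ 2 * ∑ c ∈ {c | 0 < f c}, #{b ∈ {b | 0 < f b} | f b ≤ f c} :=
        card_mul_card_add_one_le_two_mul_sum_card_le _ f
    _ ≤ 2 * ∑ c ∈ {c | 0 < f c}, #{b | f (b + c) ≠ f b + f c} := by
        refine Nat.mul_le_mul_left 2 (sum_le_sum fun c hc => ?_)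
        rw [filter_filter]
        exact card_pos_le_le_card_apply_add_ne (by simpa using hc)
    _ = _ := by
        rw [card_filter_prod_eq_sum_card_filter (fun b c => f (b + c) ≠ f b + f c) (0 < f ·)]

theorem positive_part_problems (a : ℕ) (ha : 0 < a) (f : ZMod a → ℚ) :
    (Nat.card {b : ZMod a // 0 < f b} * (Nat.card {b : ZMod a // 0 < f b} + 1) : ℚ) / 2 ≤
      (Nat.card {p : ZMod a × ZMod a //
        f (p.1 + p.2) ≠ f p.1 + f p.2 ∧ 0 < f p.2} : ℚ) := by
  have : NeZero a := ⟨ha.ne'⟩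
  simp only [Nat.card_eq_fintype_card, Fintype.card_subtype]
  rw [div_le_iff₀ two_pos, mul_comm _ (2 : ℚ)]
  exact_mod_cast card_mul_card_add_one_le_two_mul_card_apply_add_ne f
end

section
/- For positive integers n_1, ..., n_k with sum n and a nonnegative rational t, let k' be the largest index such that n_{k'} + ... + n_k - t >= 0 (assume such an index exists). Then sum_{i=1}^{k'} n_i * (n_i + n_{i+1} + ... + n_k - t) >= (n - t)*(n - t + 1)/2. -/
/-!
Let `A i = n_i + ⋯ + n_k - t`, so that `A i = A (i + 1) + n_i`, and let `T x = x (x + 1) / 2`.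
Because `n_i` is a natural number, `n_i A_i` exceeds `T (A i) - T (A (i + 1))` by
`n_i (n_i - 1) / 2 ≥ 0`; summing over `i < k'` telescopes to `T (A 0) - T (A k')`.
The last term is handled by `T (A k') ≤ n_{k'} A_{k'}`, valid because `0 ≤ A k' ≤ n_{k'}`
(the maximality of `k'` gives `A (k' + 1) ≤ 0`).
-/

open Finset

section Triangular

variable {α : Type*} [Field α] [LinearOrder α] [IsStrictOrderedRing α]

theorem triangular_add_natCast_le (a : α) (n : ℕ) :
    (a + n) * (a + n + 1) / 2 ≤ a * (a + 1) / 2 + n * (a + n) := by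
  have : (0 : α) ≤ n * (n - 1) := by
    rcases n.eq_zero_or_pos with rfl | hn
    · simp
    · have : (1 : α) ≤ n := by exact_mod_cast hn
      nlinarith
  nlinarith

theorem triangular_le_natCast_mul {a : α} {n : ℕ} (ha : 0 ≤ a) (han : a ≤ n) :
    a * (a + 1) / 2 ≤ n * a := by
  rcases n.eq_zero_or_pos with rfl | hn
  · simp [le_antisymm (by simpa using han) ha]
  · have : (1 : α) ≤ n := by exact_mod_cast hn
    nlinarith

theorem triangular_sub_le_sum_mul {A : ℕ → α} {N : ℕ → ℕ} {K : ℕ}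
    (hA : ∀ i < K, A i = A (i + 1) + N i) :
    A 0 * (A 0 + 1) / 2 - A K * (A K + 1) / 2 ≤ ∑ i ∈ range K, N i * A i := by
  rw [← sum_range_sub' (fun i => A i * (A i + 1) / 2)]
  refine sum_le_sum fun i hi => ?_
  rw [hA i (mem_range.mp hi)]
  linarith [triangular_add_natCast_le (A (i + 1)) (N i)]

theorem triangular_le_sum_mul {A : ℕ → α} {N : ℕ → ℕ} {K : ℕ}
    (hA : ∀ i ≤ K, A i = A (i + 1) + N i) (hK : 0 ≤ A K) (hK' : A (K + 1) ≤ 0) :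
    A 0 * (A 0 + 1) / 2 ≤ ∑ i ∈ range (K + 1), N i * A i := by
  have telescope := triangular_sub_le_sum_mul (K := K) fun i hi => hA i hi.le
  have last : A K * (A K + 1) / 2 ≤ N K * A K :=
    triangular_le_natCast_mul hK (by linarith [hA K le_rfl])
  rw [sum_range_succ]
  linarith

end Triangular

namespace Fin

variable {M : Type*} [AddCommMonoid M] {n : ℕ}

theorem sum_Ici_val_eq_sum_Ico (g : ℕ → M) (i : Fin n) :
    ∑ j ∈ Ici i, g j = ∑ m ∈ Ico (i : ℕ) n, g m := by
  rw [← map_valEmbedding_Ici, sum_map, valEmbedding_apply]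

theorem sum_Iic_val_eq_sum_range (g : ℕ → M) (i : Fin n) :
    ∑ j ∈ Iic i, g j = ∑ m ∈ range (i + 1), g m := by
  rw [Nat.range_succ_eq_Iic, ← map_valEmbedding_Iic, sum_map, valEmbedding_apply]

end Fin

theorem triangular_count_shifted_general (k : ℕ) (nn : Fin k → ℕ)
    (t : ℚ) (ht : 0 ≤ t) (k' : Fin k)
    (hk' : t ≤ (∑ j ∈ Finset.univ.filter (fun j => k' ≤ j), nn j : ℚ))
    (hmax : ∀ i : Fin k, k' < i →
      ((∑ j ∈ Finset.univ.filter (fun j => i ≤ j), nn j : ℚ)) < t) :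
    ((∑ i, nn i : ℚ) - t) * ((∑ i, nn i : ℚ) - t + 1) / 2 ≤
      ∑ i ∈ Finset.univ.filter (fun i => i ≤ k'),
        (nn i : ℚ) * ((∑ j ∈ Finset.univ.filter (fun j => i ≤ j), nn j : ℚ) - t) := by
  set N : ℕ → ℕ := Function.extend Fin.val nn 0
  have hN (i : Fin k) : nn i = N i := (Fin.val_injective.extend_apply nn 0 i).symm
  set A : ℕ → ℚ := fun m => ∑ j ∈ Ico m k, (N j : ℚ) - t
  have tail (i : Fin k) : (∑ j ∈ univ.filter (fun j => i ≤ j), nn j : ℚ) = A i + t := by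
    simp only [A, filter_le_eq_Ici, hN, sub_add_cancel]
    exact Fin.sum_Ici_val_eq_sum_Ico (fun m => (N m : ℚ)) i
  have total : (∑ i, nn i : ℚ) = A 0 + t := by
    simp only [A, hN, ← range_eq_Ico, Fin.sum_univ_eq_sum_range (fun m => (N m : ℚ))]
    ring
  have weighted : (∑ i ∈ univ.filter (fun i => i ≤ k'),
      (nn i : ℚ) * ((∑ j ∈ univ.filter (fun j => i ≤ j), nn j : ℚ) - t)) =
      ∑ m ∈ range (k' + 1), N m * A m := by
    simp_rw [tail, add_sub_cancel_right, hN, filter_ge_eq_Iic]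
    exact Fin.sum_Iic_val_eq_sum_range (fun m => (N m : ℚ) * A m) k'
  have hA (i : ℕ) (hi : i ≤ k') : A i = A (i + 1) + N i := by
    simp only [A, sum_eq_sum_Ico_succ_bot (hi.trans_lt k'.isLt)]
    ring
  have hK : 0 ≤ A k' := by linarith [tail k']
  have hK' : A (k' + 1) ≤ 0 := by
    by_cases h : (k' : ℕ) + 1 < k
    · linarith [tail ⟨k' + 1, h⟩, hmax ⟨k' + 1, h⟩ (Fin.lt_def.mpr (Nat.lt_succ_self _))]
    · simp [A, Ico_eq_empty_of_le (not_lt.mp h), ht]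
  rw [total, weighted, add_sub_cancel_right]
  exact triangular_le_sum_mul hA hK hK'

theorem triangular_count_shifted (k : ℕ) (nn : Fin k → ℕ) (hpos : ∀ i, 0 < nn i)
    (t : ℚ) (ht : 0 ≤ t) (k' : Fin k)
    (hk' : t ≤ (∑ j ∈ Finset.univ.filter (fun j => k' ≤ j), nn j : ℚ))
    (hmax : ∀ i : Fin k, k' < i →
      ((∑ j ∈ Finset.univ.filter (fun j => i ≤ j), nn j : ℚ)) < t) :
    ((∑ i, nn i : ℚ) - t) * ((∑ i, nn i : ℚ) - t + 1) / 2 ≤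
      ∑ i ∈ Finset.univ.filter (fun i => i ≤ k'),
        (nn i : ℚ) * ((∑ j ∈ Finset.univ.filter (fun j => i ≤ j), nn j : ℚ) - t) :=
  triangular_count_shifted_general k nn t ht k' hk' hmax
end

section
/- Let A be a finite abelian group of order a, H a torsion-free abelian group, q in [0,1], p in [0, (1-q)/2), f: A -> H a map with |{b in A : f(b)=0}| <= q*a, and S a subset of A with |S| <= p*a. Then the set P_S(f) = {(b,c) in A x A : f(b+c) != f(b) + f(c) and b+c not in S} has cardinality at least (a*(1-q-2p)/2) * (a*(1-q-2p)/2 + 1). -/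
/-!
The span of the values of `f` is a finitely generated torsion-free abelian group, hence free,
hence embeds into the lexicographically ordered group `ℤⁿ`; so we may take `f` with values in a
linearly ordered group `L`. If `0 < f x`, `0 < f y` and `(x, y)` is not a defect, then `x + y`
lies in `S` or `f x < f (x + y)`; as `y ↦ x + y` is injective, `x` has at least
`#{z | 0 < f z ≤ f x} - #S` defect partners `y` with `0 < f y`. Summing over the positive
elements in increasing order of `f` gives `∑_{k < n₊} (k + 1 - s) = (n₊ - s)(n₊ - s + 1)/2`
defects, likewise for the negative ones, and `n₊ + n₋ ≥ a - #{f = 0}` together with convexity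
of `t ↦ t (t + 1)` gives the bound.
-/

open Finset

/-- The set `P_S(f)` of the paper. -/
def defectPairs {A M : Type*} [Add A] [Fintype A] [DecidableEq A] [Add M] [DecidableEq M]
    (f : A → M) (S : Finset A) : Finset (A × A) :=
  {x | f (x.1 + x.2) ≠ f x.1 + f x.2 ∧ x.1 + x.2 ∉ S}

section Defect

variable {A M N : Type*} [Add A] [Fintype A] [DecidableEq A]

@[simp]
lemma mem_defectPairs [Add M] [DecidableEq M] {f : A → M} {S : Finset A} {x : A × A} :
    x ∈ defectPairs f S ↔ f (x.1 + x.2) ≠ f x.1 + f x.2 ∧ x.1 + x.2 ∉ S := by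
  simp [defectPairs]

lemma defectPairs_comp [AddZeroClass M] [AddZeroClass N] [DecidableEq M] [DecidableEq N]
    {ψ : M →+ N} (hψ : Function.Injective ψ) (f : A → M) (S : Finset A) :
    defectPairs (ψ ∘ f) S = defectPairs f S := by
  ext x
  simp [← map_add, hψ.ne_iff]

lemma defectPairs_neg [AddCommGroup M] [DecidableEq M] (f : A → M) (S : Finset A) :
    defectPairs (-f) S = defectPairs f S :=
  defectPairs_comp (ψ := negAddMonoidHom) neg_injective f S

end Defect

lemma sum_range_tsub_mul_two (n s : ℕ) :
    (∑ k ∈ range n, (k + 1 - s)) * 2 = (n - s) * (n - s + 1) := by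
  induction n with
  | zero => simp
  | succ n ih =>
    rw [sum_range_succ, add_mul, ih]
    rcases le_or_gt s n with h | h
    · rw [show n + 1 - s = n - s + 1 by omega]
      ring
    · simp [show n + 1 - s = 0 by omega, show n - s = 0 by omega]

lemma sum_range_le_sum_card_filter_le {ι β : Type*} [DecidableEq ι] [LinearOrder β] (g : ι → β)
    {h : ℕ → ℕ} (hh : Monotone h) (T : Finset ι) :
    ∑ k ∈ range #T, h (k + 1) ≤ ∑ x ∈ T, h #{z ∈ T | g z ≤ g x} := by
  induction T using Finset.induction_on_max_value g with
  | empty => simp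
  | insert a T haT hmax ih =>
    rw [card_insert_of_notMem haT, sum_range_succ, sum_insert haT, add_comm,
      filter_true_of_mem fun z hz => ?_, card_insert_of_notMem haT]
    · gcongr _ + ?_
      refine ih.trans (sum_le_sum fun x _ => hh (card_le_card ?_))
      exact filter_subset_filter _ (subset_insert a T)
    · rcases mem_insert.1 hz with rfl | hz
      exacts [le_rfl, hmax z hz]

lemma two_mul_mul_add_one_le {K : Type*} [CommRing K] [LinearOrder K] [IsStrictOrderedRing K]
    {m x y : K} (hm : 0 ≤ m) (h : 2 * m ≤ x + y) :
    2 * (m * (m + 1)) ≤ x * (x + 1) + y * (y + 1) := by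
  nlinarith [sq_nonneg (x - y)]

lemma exists_injective_addMonoidHom_linearOrder (M : Type*) [AddCommGroup M]
    [Module.Finite ℤ M] [Module.IsTorsionFree ℤ M] :
    ∃ (L : Type) (_ : AddCommGroup L) (_ : LinearOrder L) (_ : IsOrderedAddMonoid L)
      (φ : M →+ L), Function.Injective φ :=
  let e := (Module.finBasis ℤ M).repr.toAddEquiv.trans (toLexAddEquiv _)
  ⟨_, inferInstance, inferInstance, inferInstance, e.toAddMonoidHom, e.injective⟩

section Ordered

variable {A L : Type*} [AddCommGroup A] [Fintype A] [DecidableEq A]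
  [AddCommGroup L] [LinearOrder L] [IsOrderedAddMonoid L] (g : A → L) (S : Finset A)

lemma tsub_card_le_card_defectPairs_fiber {x : A} (hx : 0 < g x) :
    #{z ∈ ({z | 0 < g z} : Finset A) | g z ≤ g x} - #S ≤
      #{y ∈ ({z | 0 < g z} : Finset A) | (x, y) ∈ defectPairs g S} := by
  set T : Finset A := {z | 0 < g z}
  have hnondefect : #{y ∈ T | (x, y) ∉ defectPairs g S} ≤ #{z ∈ T | ¬ g z ≤ g x} + #S := by
    refine (card_le_card_of_injOn (x + ·) (fun y hy => ?_)
      (add_right_injective x).injOn).trans (card_union_le _ _)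
    simp only [T, coe_filter, mem_filter, mem_univ, true_and, Set.mem_ofPred_eq, mem_defectPairs,
      not_and_or, not_not] at hy
    simp only [T, coe_union, coe_filter, mem_filter, mem_univ, true_and, Set.mem_union,
      Set.mem_ofPred_eq, SetLike.mem_coe, not_le]
    rcases hy with ⟨hy, hadd | hS⟩
    · have : g x < g (x + y) := hadd ▸ lt_add_of_pos_right _ hy
      exact .inl ⟨hx.trans this, this⟩
    · exact .inr hS
  have := card_filter_add_card_filter_not (s := T) (fun y => (x, y) ∈ defectPairs g S)
  have := card_filter_add_card_filter_not (s := T) (fun z => g z ≤ g x)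
  omega

lemma sum_range_tsub_le_card_defectPairs_pos :
    ∑ k ∈ range #{x | 0 < g x}, (k + 1 - #S) ≤
      #{x ∈ defectPairs g S | 0 < g x.1 ∧ 0 < g x.2} := by
  set T : Finset A := {z | 0 < g z}
  have hfiber : #{x ∈ defectPairs g S | 0 < g x.1 ∧ 0 < g x.2} =
      ∑ x ∈ T, #{y ∈ T | (x, y) ∈ defectPairs g S} := by
    rw [show {x ∈ defectPairs g S | 0 < g x.1 ∧ 0 < g x.2} = {x ∈ T ×ˢ T | x ∈ defectPairs g S} by
      ext; simp [T, and_comm, and_assoc], card_filter, sum_product]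
    simp only [card_filter]
  calc ∑ k ∈ range #T, (k + 1 - #S)
      ≤ ∑ x ∈ T, (#{z ∈ T | g z ≤ g x} - #S) :=
        sum_range_le_sum_card_filter_le g (h := (· - #S)) (fun _ _ h => Nat.sub_le_sub_right h _) T
    _ ≤ ∑ x ∈ T, #{y ∈ T | (x, y) ∈ defectPairs g S} :=
        sum_le_sum fun x hx => tsub_card_le_card_defectPairs_fiber g S (mem_filter.1 hx).2
    _ = _ := hfiber.symm

lemma tsub_mul_tsub_add_one_add_le_two_mul_card_defectPairs :
    (#{x | 0 < g x} - #S) * (#{x | 0 < g x} - #S + 1) +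
      (#{x | g x < 0} - #S) * (#{x | g x < 0} - #S + 1) ≤ 2 * #(defectPairs g S) := by
  have hpos := sum_range_tsub_le_card_defectPairs_pos g S
  have hneg := sum_range_tsub_le_card_defectPairs_pos (-g) S
  simp only [defectPairs_neg, Pi.neg_apply, neg_pos] at hneg
  have hdisj : Disjoint {x ∈ defectPairs g S | 0 < g x.1 ∧ 0 < g x.2}
      {x ∈ defectPairs g S | g x.1 < 0 ∧ g x.2 < 0} :=
    disjoint_filter.2 fun _ _ hp hn => lt_asymm hp.1 hn.1
  have hsub := card_le_card (union_subset (filter_subset (fun x : A × A => 0 < g x.1 ∧ 0 < g x.2)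
    (defectPairs g S)) (filter_subset (fun x : A × A => g x.1 < 0 ∧ g x.2 < 0) _))
  rw [card_union_of_disjoint hdisj] at hsub
  rw [← sum_range_tsub_mul_two, ← sum_range_tsub_mul_two]
  omega

lemma mul_add_one_le_card_defectPairs {m : ℚ} (hm : 0 ≤ m)
    (h : 2 * m + 2 * #S + #{x | g x = 0} ≤ Fintype.card A) :
    m * (m + 1) ≤ #(defectPairs g S) := by
  have hcover : Fintype.card A ≤ #{x | 0 < g x} + #{x | g x < 0} + #{x | g x = 0} := by
    refine (card_le_card fun x _ => ?_).trans
      ((card_union_le _ _).trans (Nat.add_le_add_right (card_union_le _ _) _))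
    have := lt_trichotomy (g x) 0
    simp only [mem_union, mem_filter, mem_univ, true_and]
    tauto
  have hX : ((#{x | 0 < g x} : ℕ) : ℚ) ≤ ((#{x | 0 < g x} - #S : ℕ) : ℚ) + #S :=
    mod_cast le_tsub_add
  have hY : ((#{x | g x < 0} : ℕ) : ℚ) ≤ ((#{x | g x < 0} - #S : ℕ) : ℚ) + #S :=
    mod_cast le_tsub_add
  have hcount : ((_ : ℕ) : ℚ) ≤ _ :=
    Nat.cast_le.2 (tsub_mul_tsub_add_one_add_le_two_mul_card_defectPairs g S)
  have hcover' : (Fintype.card A : ℚ) ≤ _ := Nat.cast_le.2 hcover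
  push_cast at hcount hcover'
  linarith [two_mul_mul_add_one_le hm (x := ((#{x | 0 < g x} - #S : ℕ) : ℚ))
    (y := ((#{x | g x < 0} - #S : ℕ) : ℚ)) (by linarith)]

end Ordered

theorem almost_hom_almost_zero_strengthened_general {A H : Type*} [AddCommGroup A] [Fintype A]
    [AddCommGroup H]
    (htf : ∀ (m : ℤ) (h : H), m ≠ 0 → m • h = 0 → h = 0)
    (a : ℕ) (ha : Fintype.card A = a)
    (q : ℚ)
    (p : ℚ) (hp : p < (1 - q) / 2)
    (f : A → H)
    (hZ : (Nat.card {b : A // f b = 0} : ℚ) ≤ q * a)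
    (S : Set A) (hS : (Nat.card S : ℚ) ≤ p * a) :
    ((a : ℚ) * (1 - q - 2 * p) / 2) * ((a : ℚ) * (1 - q - 2 * p) / 2 + 1) ≤
      (Nat.card {x : A × A // f (x.1 + x.2) ≠ f x.1 + f x.2 ∧ x.1 + x.2 ∉ S} : ℚ) := by
  classical
  have : Module.IsTorsionFree ℤ H :=
    .of_smul_eq_zero fun m h hmh => or_iff_not_imp_left.2 fun hm => htf m h hm hmh
  let M := Submodule.span ℤ (Set.range f)
  have : Module.Finite ℤ M := Module.Finite.span_of_finite ℤ (Set.finite_range f)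
  obtain ⟨L, _, _, _, φ, hφ⟩ := exists_injective_addMonoidHom_linearOrder M
  let f' : A → M := fun x => ⟨f x, Submodule.subset_span ⟨x, rfl⟩⟩
  have hdefect : defectPairs (φ ∘ f') S.toFinset = defectPairs f S.toFinset := by
    rw [defectPairs_comp hφ, ← defectPairs_comp (ψ := M.subtype.toAddMonoidHom)
      Subtype.val_injective]
    rfl
  have hzero : #{x | (φ ∘ f') x = 0} = Nat.card {b : A // f b = 0} := by
    simp [Nat.card_eq_fintype_card, Fintype.card_subtype, f', map_eq_zero_iff φ hφ]
  have hpairs : Nat.card {x : A × A // f (x.1 + x.2) ≠ f x.1 + f x.2 ∧ x.1 + x.2 ∉ S} =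
      #(defectPairs f S.toFinset) := by
    simp [Nat.card_eq_fintype_card, Fintype.card_subtype, defectPairs]
  have hS' : (#S.toFinset : ℚ) ≤ p * a := by rwa [← Nat.card_eq_card_toFinset]
  rw [hpairs, ← hdefect]
  refine mul_add_one_le_card_defectPairs _ _
    (div_nonneg (mul_nonneg a.cast_nonneg (by linarith)) zero_le_two) ?_
  rw [hzero, ha]
  linarith

theorem almost_hom_almost_zero_strengthened {A H : Type*} [AddCommGroup A] [Fintype A]
    [AddCommGroup H]
    (htf : ∀ (m : ℤ) (h : H), m ≠ 0 → m • h = 0 → h = 0)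
    (a : ℕ) (ha : Fintype.card A = a)
    (q : ℚ) (hq0 : 0 ≤ q) (hq1 : q ≤ 1)
    (p : ℚ) (hp0 : 0 ≤ p) (hp : p < (1 - q) / 2)
    (f : A → H)
    (hZ : (Nat.card {b : A // f b = 0} : ℚ) ≤ q * a)
    (S : Set A) (hS : (Nat.card S : ℚ) ≤ p * a) :
    ((a : ℚ) * (1 - q - 2 * p) / 2) * ((a : ℚ) * (1 - q - 2 * p) / 2 + 1) ≤
      (Nat.card {x : A × A // f (x.1 + x.2) ≠ f x.1 + f x.2 ∧ x.1 + x.2 ∉ S} : ℚ) :=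
  almost_hom_almost_zero_strengthened_general htf a ha q p hp f hZ S hS
end

section
/- Let p, q in [0,1] with p < (1-q)/2, and let f: {1,...,2a} -> Q (rationals) satisfy: (1) |{x in [a] : f(x) = 0}| <= q*a; (2) |{x in [a] : f(x+a) != f(x)}| <= p*a. Then |{(x,y) in [a] x [a] : f(x+y) != f(x) + f(y)}| >= ((1-q-2p)^2/4)*a^2 + ((1-q-2p)/2)*a. -/
/-!
Let `P` and `N` be the positions in `[a]` where `f` is positive, resp. negative, and let `S` be
the positions `s ∈ (a, 2a]` with `f s ≠ f (s - a)` and `0 < f s`. If `x, y ∈ P` satisfy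
`f (x + y) = f x + f y` and `x + y ∉ S`, then `z`, the reduction of `x + y` into `[a]`, lies in
`P` with `f x < f z`. As `(x, y) ↦ (x, z)` is injective and at most half of the off-diagonal pairs
of `P` increase, `#P² + #P ≤ 2 #(problems in P × P) + 2 #{(x, y) ∈ P × P | x + y ∈ S}`.
The last count is at most `∑_{j < #P} min(#S, 2j + 1)`: the hook `{min P} × Q ∪ P × {max Q}`
has pairwise distinct sums, and removing it from `P × Q` leaves a product of two smaller sets
of equal size. Adding the resulting estimates for `f` and `-f`, where `#P + #N ≥ (1 - q) a` and
the two sets `S` have at most `p a` elements together, gives the bound.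
-/

open Finset

theorem four_mul_sum_min_add_sq_le (s n : ℕ) :
    4 * ∑ j ∈ range n, min s (2 * j + 1) + min s (2 * n) ^ 2 ≤
      4 * min s (2 * n) * n + min s (2 * n) := by
  induction n with
  | zero => simp
  | succ n ih =>
    rw [sum_range_succ]
    rcases le_or_gt s (2 * n) with hs | hs
    · rw [min_eq_left hs] at ih
      rw [min_eq_left (by omega : s ≤ 2 * n + 1), min_eq_left (by omega : s ≤ 2 * (n + 1))]
      nlinarith
    · rw [min_eq_right hs.le] at ih
      rw [min_eq_right (by omega : 2 * n + 1 ≤ s)]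
      rcases (by omega : s = 2 * n + 1 ∨ 2 * (n + 1) ≤ s) with rfl | hs'
      · rw [min_eq_left (by omega : 2 * n + 1 ≤ 2 * (n + 1))]
        nlinarith
      · rw [min_eq_right hs']
        nlinarith

section PairSums

variable {α : Type*} [AddCommMonoid α] [LinearOrder α] [IsOrderedCancelAddMonoid α]

theorem injOn_add_hook {P Q : Finset α} (hP : P.Nonempty) (hQ : Q.Nonempty) :
    Set.InjOn (fun w : α × α => w.1 + w.2)
      ↑({P.min' hP} ×ˢ Q ∪ (P.erase (P.min' hP)) ×ˢ {Q.max' hQ}) := by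
  have key : ∀ x ∈ P.erase (P.min' hP), ∀ y ∈ Q, P.min' hP + y ≠ x + Q.max' hQ := by
    intro x hx y hy h
    obtain ⟨hxm, hxP⟩ := mem_erase.mp hx
    exact hxm ((add_eq_add_iff_eq_and_eq (P.min'_le x hxP) (Q.le_max' y hy)).mp h).1.symm
  rintro ⟨x, y⟩ hw ⟨x', y'⟩ hw' (h : x + y = x' + y')
  simp only [coe_union, coe_product, coe_singleton, Set.mem_union, Set.mem_prod,
    Set.mem_singleton_iff, mem_coe] at hw hw'
  rcases hw with ⟨rfl, hy⟩ | ⟨hx, rfl⟩ <;> rcases hw' with ⟨rfl, hy'⟩ | ⟨hx', rfl⟩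
  · rw [add_left_cancel h]
  · exact absurd h (key x' hx' y hy)
  · exact absurd h.symm (key x hx y' hy')
  · rw [add_right_cancel h]

theorem card_filter_add_mem_le_sum_min (S P Q : Finset α) (hPQ : #P = #Q) :
    #{w ∈ P ×ˢ Q | w.1 + w.2 ∈ S} ≤ ∑ j ∈ range #P, min #S (2 * j + 1) := by
  induction hP : #P generalizing P Q with
  | zero => simp [card_eq_zero.mp hP]
  | succ n ih =>
    have hQ : #Q = n + 1 := hPQ ▸ hP
    have hPne : P.Nonempty := card_pos.mp (by omega)
    have hQne : Q.Nonempty := card_pos.mp (by omega)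
    set m := P.min' hPne
    set M := Q.max' hQne
    set H := {m} ×ˢ Q ∪ (P.erase m) ×ˢ {M}
    have hcover : P ×ˢ Q ⊆ H ∪ (P.erase m) ×ˢ (Q.erase M) := by
      rintro ⟨x, y⟩ hw
      obtain ⟨hx, hy⟩ := mem_product.mp hw
      by_cases hxm : x = m
      · simp [H, hxm, hy]
      by_cases hyM : y = M
      · simp [H, hyM, hxm, hx]
      · simp [hxm, hyM, hx, hy]
    have hH_S : #{w ∈ H | w.1 + w.2 ∈ S} ≤ #S :=
      card_le_card_of_injOn _ (fun w hw => (mem_filter.mp hw).2)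
        ((injOn_add_hook hPne hQne).mono (coe_subset.mpr (filter_subset _ _)))
    have hH_card : #{w ∈ H | w.1 + w.2 ∈ S} ≤ 2 * n + 1 := by
      refine (card_filter_le _ _).trans ((card_union_le _ _).trans ?_)
      rw [card_product, card_product, card_singleton, card_singleton,
        card_erase_of_mem (P.min'_mem hPne)]
      omega
    have hrest := ih (P.erase m) (Q.erase M)
      (by rw [card_erase_of_mem (P.min'_mem hPne), card_erase_of_mem (Q.max'_mem hQne), hPQ])
      (by rw [card_erase_of_mem (P.min'_mem hPne), hP, Nat.add_sub_cancel])
    calc #{w ∈ P ×ˢ Q | w.1 + w.2 ∈ S}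
        ≤ #{w ∈ H ∪ (P.erase m) ×ˢ (Q.erase M) | w.1 + w.2 ∈ S} :=
          card_le_card (filter_subset_filter _ hcover)
      _ ≤ #{w ∈ H | w.1 + w.2 ∈ S} + #{w ∈ (P.erase m) ×ˢ (Q.erase M) | w.1 + w.2 ∈ S} := by
          rw [filter_union]; exact card_union_le _ _
      _ ≤ min #S (2 * n + 1) + ∑ j ∈ range n, min #S (2 * j + 1) :=
          add_le_add (le_min hH_S hH_card) hrest
      _ = ∑ j ∈ range (n + 1), min #S (2 * j + 1) := by rw [sum_range_succ, add_comm]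

theorem four_mul_card_filter_add_mem_add_sq_le (S P : Finset α) :
    4 * #{w ∈ P ×ˢ P | w.1 + w.2 ∈ S} + min #S (2 * #P) ^ 2 ≤
      4 * min #S (2 * #P) * #P + min #S (2 * #P) :=
  (Nat.add_le_add_right (Nat.mul_le_mul_left 4 (card_filter_add_mem_le_sum_min S P P rfl)) _).trans
    (four_mul_sum_min_add_sq_le _ _)

end PairSums

theorem two_mul_card_filter_lt_add_card_le {ι β : Type*} [DecidableEq ι] [LinearOrder β]
    (g : ι → β) (P : Finset ι) :
    2 * #{w ∈ P ×ˢ P | g w.1 < g w.2} + #P ≤ #P * #P := by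
  set inc := {w ∈ P ×ˢ P | g w.1 < g w.2}
  set dec := {w ∈ P ×ˢ P | g w.2 < g w.1}
  have hswap : #inc = #dec :=
    card_nbij' Prod.swap Prod.swap (fun w hw => by simp_all [inc, dec])
      (fun w hw => by simp_all [inc, dec]) (fun _ _ => rfl) (fun _ _ => rfl)
  have hdisj : Disjoint inc dec := disjoint_filter.mpr fun _ _ h h' => lt_asymm h h'
  have hsub : inc ∪ dec ⊆ P.offDiag := by
    intro w hw
    simp only [inc, dec, mem_union, mem_filter, mem_product] at hw
    rcases hw with ⟨⟨h1, h2⟩, hlt⟩ | ⟨⟨h1, h2⟩, hlt⟩ <;>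
      exact mem_offDiag.mpr ⟨h1, h2, fun h => by rw [h] at hlt; exact lt_irrefl _ hlt⟩
  have := card_le_card hsub
  rw [card_union_of_disjoint hdisj, offDiag_card] at this
  have := Nat.le_mul_self #P
  omega

section PositivePart

variable {β : Type*} [AddCommMonoid β] [LinearOrder β] [IsOrderedCancelAddMonoid β]

theorem sq_add_card_le_two_mul_card_problems (g : ℕ → β) (a : ℕ) (P S : Finset ℕ)
    (hP : ∀ x, x ∈ P ↔ x ∈ Icc 1 a ∧ 0 < g x)
    (hS : ∀ z ∈ Icc 1 a, g (z + a) ≠ g z → 0 < g (z + a) → z + a ∈ S) :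
    #P ^ 2 + #P ≤ 2 * #{w ∈ P ×ˢ P | g (w.1 + w.2) ≠ g w.1 + g w.2} +
      2 * #{w ∈ P ×ˢ P | w.1 + w.2 ∈ S} := by
  set rest := {w ∈ P ×ˢ P | g (w.1 + w.2) = g w.1 + g w.2 ∧ w.1 + w.2 ∉ S}
  have hcover : P ×ˢ P ⊆ ({w ∈ P ×ˢ P | g (w.1 + w.2) ≠ g w.1 + g w.2} ∪
      {w ∈ P ×ˢ P | w.1 + w.2 ∈ S}) ∪ rest := by
    intro w hw
    simp only [rest, mem_union, mem_filter]
    tauto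
  have hrest : #rest ≤ #{w ∈ P ×ˢ P | g w.1 < g w.2} := by
    refine card_le_card_of_injOn
      (fun w => (w.1, if w.1 + w.2 ≤ a then w.1 + w.2 else w.1 + w.2 - a)) ?_ ?_
    · rintro ⟨x, y⟩ hw
      simp only [rest, coe_filter, Set.mem_ofPred_eq, mem_product, hP] at hw
      obtain ⟨⟨⟨hxI, hx⟩, ⟨hyI, hy⟩⟩, hadd, hxyS⟩ := hw
      have hz : (if x + y ≤ a then x + y else x + y - a) ∈ Icc 1 a ∧
          g (if x + y ≤ a then x + y else x + y - a) = g x + g y := by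
        rw [mem_Icc] at hxI hyI
        split_ifs with hxy
        · exact ⟨mem_Icc.mpr ⟨by omega, hxy⟩, hadd⟩
        · obtain ⟨z, hxyz⟩ : ∃ z, x + y = z + a := ⟨x + y - a, by omega⟩
          rw [hxyz] at hadd hxyS ⊢
          rw [Nat.add_sub_cancel]
          have hzI : z ∈ Icc 1 a := mem_Icc.mpr ⟨by omega, by omega⟩
          refine ⟨hzI, by_contra fun hper => hxyS (hS z hzI ?_ ?_)⟩
          · rw [hadd]; exact Ne.symm hper
          · rw [hadd]; exact add_pos hx hy
      simp only [coe_filter, Set.mem_ofPred_eq, mem_product, hP, hz.2]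
      exact ⟨⟨⟨hxI, hx⟩, hz.1, add_pos hx hy⟩, lt_add_of_pos_right _ hy⟩
    · rintro ⟨x, y⟩ hw ⟨x', y'⟩ hw' h
      simp only [rest, coe_filter, Set.mem_ofPred_eq, mem_product, hP, mem_Icc,
        Prod.mk.injEq] at hw hw' h
      obtain ⟨rfl, h⟩ := h
      refine Prod.ext rfl ?_
      split_ifs at h <;> omega
  have hinc := two_mul_card_filter_lt_add_card_le g P
  have hcard := card_le_card hcover
  have hunion := card_union_le ({w ∈ P ×ˢ P | g (w.1 + w.2) ≠ g w.1 + g w.2} ∪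
      {w ∈ P ×ˢ P | w.1 + w.2 ∈ S}) rest
  have hunion' := card_union_le {w ∈ P ×ˢ P | g (w.1 + w.2) ≠ g w.1 + g w.2}
      {w ∈ P ×ˢ P | w.1 + w.2 ∈ S}
  rw [card_product] at hcard
  rw [sq]
  omega

theorem two_mul_sq_add_le_four_mul_card_problems (g : ℕ → β) (a : ℕ) (P S : Finset ℕ)
    (hP : ∀ x, x ∈ P ↔ x ∈ Icc 1 a ∧ 0 < g x)
    (hS : ∀ z ∈ Icc 1 a, g (z + a) ≠ g z → 0 < g (z + a) → z + a ∈ S) :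
    2 * #P ^ 2 + 2 * #P + min #S (2 * #P) ^ 2 ≤
      4 * #{w ∈ P ×ˢ P | g (w.1 + w.2) ≠ g w.1 + g w.2} +
        4 * min #S (2 * #P) * #P + min #S (2 * #P) := by
  have := sq_add_card_le_two_mul_card_problems g a P S hP hS
  have := four_mul_card_filter_add_mem_add_sq_le S P
  omega

end PositivePart

theorem sq_add_two_mul_le_four_mul_add {R : Type*} [CommRing R] [LinearOrder R]
    [IsStrictOrderedRing R] {U V k₁ k₂ A₁ A₂ c : R} (hk₁ : 0 ≤ k₁) (hk₂ : 0 ≤ k₂) (hc : 0 ≤ c)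
    (hcW : c ≤ U + V - 2 * k₁ - 2 * k₂)
    (h₁ : 2 * U ^ 2 + 2 * U + k₁ ^ 2 ≤ 4 * A₁ + 4 * k₁ * U + k₁)
    (h₂ : 2 * V ^ 2 + 2 * V + k₂ ^ 2 ≤ 4 * A₂ + 4 * k₂ * V + k₂) :
    c ^ 2 + 2 * c ≤ 4 * (A₁ + A₂) := by
  nlinarith [sq_nonneg (U - k₁ - (V - k₂)), mul_nonneg (add_nonneg hk₁ hk₂) (hc.trans hcW),
    mul_nonneg hk₁ hk₂,
    mul_nonneg (sub_nonneg.mpr hcW) (by linarith : 0 ≤ U + V - 2 * k₁ - 2 * k₂ + c + 2)]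

section Signs

variable {ι β : Type*} [DecidableEq ι] [Zero β] [LinearOrder β]

theorem card_le_card_filter_eq_zero_add_pos_add_neg (s : Finset ι) (f : ι → β) :
    #s ≤ #{x ∈ s | f x = 0} + #{x ∈ s | 0 < f x} + #{x ∈ s | f x < 0} := by
  calc #s ≤ #({x ∈ s | f x = 0} ∪ {x ∈ s | 0 < f x} ∪ {x ∈ s | f x < 0}) := by
        refine card_le_card fun x hx => ?_
        simp only [mem_union, mem_filter]
        rcases lt_trichotomy (f x) 0 with h | h | h <;> simp [hx, h]
    _ ≤ _ := (card_union_le _ _).trans (Nat.add_le_add_right (card_union_le _ _) _)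

theorem card_filter_pos_add_card_filter_neg_le (s : Finset ι) (f : ι → β) :
    #{x ∈ s | 0 < f x} + #{x ∈ s | f x < 0} ≤ #s := by
  rw [← card_union_of_disjoint (disjoint_filter.mpr fun _ _ h h' => lt_asymm h h')]
  exact card_le_card (union_subset (filter_subset _ _) (filter_subset _ _))

end Signs

theorem card_filter_product_add_card_filter_product_le {ι : Type*} [DecidableEq ι]
    {s P N : Finset ι} (hP : P ⊆ s) (hN : N ⊆ s) (hPN : Disjoint P N)
    (r : ι × ι → Prop) [DecidablePred r] :
    #{w ∈ P ×ˢ P | r w} + #{w ∈ N ×ˢ N | r w} ≤ #{w ∈ s ×ˢ s | r w} := by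
  rw [← card_union_of_disjoint (disjoint_filter_filter (disjoint_product.mpr (.inl hPN))),
    ← filter_union]
  exact card_le_card (filter_subset_filter _
    (union_subset (product_subset_product hP hP) (product_subset_product hN hN)))

theorem nonzero_and_periodic_gives_problems_general (a : ℕ) (f : ℕ → ℚ)
    (p q : ℚ) (hp : p < (1 - q) / 2)
    (hZ : (((Finset.Icc 1 a).filter (fun x => f x = 0)).card : ℚ) ≤ q * a)
    (hNP : (((Finset.Icc 1 a).filter (fun x => f (x + a) ≠ f x)).card : ℚ) ≤ p * a) :
    ((1 - q - 2 * p) ^ 2 / 4) * (a : ℚ) ^ 2 + ((1 - q - 2 * p) / 2) * a ≤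
      ((((Finset.Icc 1 a) ×ˢ (Finset.Icc 1 a)).filter
        (fun x => f (x.1 + x.2) ≠ f x.1 + f x.2)).card : ℚ) := by
  set D := {z ∈ Icc 1 a | f (z + a) ≠ f z}
  set P := {x ∈ Icc 1 a | 0 < f x}
  set N := {x ∈ Icc 1 a | f x < 0}
  set SP := {z ∈ D | 0 < f (z + a)}.image (· + a)
  set SN := {z ∈ D | f (z + a) < 0}.image (· + a)
  have hpos := two_mul_sq_add_le_four_mul_card_problems f a P SP (fun x => mem_filter)
    (fun z hz hne hpos => mem_image_of_mem _ (mem_filter.mpr ⟨mem_filter.mpr ⟨hz, hne⟩, hpos⟩))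
  have hneg := two_mul_sq_add_le_four_mul_card_problems (-f) a N SN (fun x => by simp [N])
    (fun z hz hne hneg => mem_image_of_mem _ (mem_filter.mpr
      ⟨mem_filter.mpr ⟨hz, by simpa using hne⟩, by simpa using hneg⟩))
  simp only [Pi.neg_apply, ← neg_add, ne_eq, neg_inj] at hneg
  have hprob := card_filter_product_add_card_filter_product_le (P := P) (N := N)
    (filter_subset _ _) (filter_subset _ _)
    (disjoint_filter.mpr fun _ _ hpos hneg => lt_asymm hpos hneg)
    (fun w : ℕ × ℕ => f (w.1 + w.2) ≠ f w.1 + f w.2)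
  have hsign := card_le_card_filter_eq_zero_add_pos_add_neg (Icc 1 a) f
  rw [Nat.card_Icc, Nat.add_sub_cancel] at hsign
  have hSD : #SP + #SN ≤ #D := (add_le_add card_image_le card_image_le).trans
    (card_filter_pos_add_card_filter_neg_le D fun z => f (z + a))
  have hcW : (1 - q - 2 * p) * a ≤
      (#P : ℚ) + #N - 2 * (min #SP (2 * #P) : ℕ) - 2 * (min #SN (2 * #N) : ℕ) := by
    have : (a : ℚ) ≤ _ := Nat.cast_le.mpr hsign
    have : ((#SP + #SN : ℕ) : ℚ) ≤ #D := Nat.cast_le.mpr hSD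
    have : ((min #SP (2 * #P) : ℕ) : ℚ) ≤ #SP := Nat.cast_le.mpr (min_le_left _ _)
    have : ((min #SN (2 * #N) : ℕ) : ℚ) ≤ #SN := Nat.cast_le.mpr (min_le_left _ _)
    push_cast at *
    linarith
  have key := sq_add_two_mul_le_four_mul_add (R := ℚ)
    (A₁ := #{w ∈ P ×ˢ P | f (w.1 + w.2) ≠ f w.1 + f w.2})
    (A₂ := #{w ∈ N ×ˢ N | f (w.1 + w.2) ≠ f w.1 + f w.2})
    (by positivity) (by positivity) (mul_nonneg (by linarith) a.cast_nonneg) hcW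
    (by exact_mod_cast hpos) (by exact_mod_cast hneg)
  have hprobℚ : _ ≤ (_ : ℚ) := Nat.cast_le.mpr hprob
  push_cast at hprobℚ
  linarith

theorem nonzero_and_periodic_gives_problems (a : ℕ) (ha : 0 < a) (f : ℕ → ℚ)
    (p q : ℚ) (hq0 : 0 ≤ q) (hq1 : q ≤ 1) (hp0 : 0 ≤ p) (hp : p < (1 - q) / 2)
    (hZ : (((Finset.Icc 1 a).filter (fun x => f x = 0)).card : ℚ) ≤ q * a)
    (hNP : (((Finset.Icc 1 a).filter (fun x => f (x + a) ≠ f x)).card : ℚ) ≤ p * a) :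
    ((1 - q - 2 * p) ^ 2 / 4) * (a : ℚ) ^ 2 + ((1 - q - 2 * p) / 2) * a ≤
      ((((Finset.Icc 1 a) ×ˢ (Finset.Icc 1 a)).filter
        (fun x => f (x.1 + x.2) ≠ f x.1 + f x.2)).card : ℚ) :=
  nonzero_and_periodic_gives_problems_general a f p q hp hZ hNP
end

section
/- Let f: {1,...,2a} -> Q with a > 1. If there exists x in [a] with f(x) = 0 and f(1) != 0, then for any x_1 < x_2 both in the zero set Z(f) = {x in [a] : f(x) = 0}, at least one of x_1, x_1+1, ..., x_2 - 1 belongs to P_1(f) = {x in [a] : f(x+1) != f(x) + f(1)}. Consequently |Z(f)| <= |P_1(f)|. -/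
/-!
If `f (y + 1) = f y + f 1` held at every `y` with `s ≤ y < t`, then `f t = f s + (t - s) • f 1`.
As `f 1 ≠ 0` in the torsion-free group `ℚ`, this fails when `f s = f t = 0` with `s < t`, and
when `s = 1 ≤ t` with `f t = 0`, since then `f t = t • f 1`. Hence each zero has a point of
`P₁(f)` below it and any two zeros are separated by one, so counting the points of `P₁(f)` below
a zero gives a strictly increasing map from `Z(f)` into `{1, …, |P₁(f)|}`.
-/

open Finset

namespace Finset

theorem card_le_card_of_interlaced {α : Type*} [LinearOrder α] {Z P : Finset α}
    (hbelow : ∀ z ∈ Z, ∃ p ∈ P, p < z)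
    (hbetween : ∀ z₁ z₂, z₁ ∈ Z → z₂ ∈ Z → z₁ < z₂ → ∃ p ∈ P, z₁ ≤ p ∧ p < z₂) :
    #Z ≤ #P := by
  set rank : α → ℕ := fun z => #(P.filter (· < z))
  have rank_strictMonoOn : StrictMonoOn rank Z := by
    intro z₁ hz₁ z₂ hz₂ hlt
    obtain ⟨p, hpP, hzp, hpz⟩ := hbetween z₁ z₂ hz₁ hz₂ hlt
    refine card_lt_card ((ssubset_iff_of_subset ?_).2 ⟨p, ?_, ?_⟩)
    · exact fun q hq => mem_filter.2 ⟨(mem_filter.1 hq).1, (mem_filter.1 hq).2.trans hlt⟩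
    · exact mem_filter.2 ⟨hpP, hpz⟩
    · exact fun hp => (mem_filter.1 hp).2.not_ge hzp
  have rank_mem : ∀ z ∈ Z, rank z ∈ Icc 1 #P := by
    intro z hz
    obtain ⟨p, hpP, hpz⟩ := hbelow z hz
    exact mem_Icc.2 ⟨card_pos.2 ⟨p, mem_filter.2 ⟨hpP, hpz⟩⟩, card_filter_le P _⟩
  simpa using card_le_card_of_injOn rank rank_mem rank_strictMonoOn.injOn

end Finset

theorem eq_add_nsmul_of_forall_succ_eq_add {M : Type*} [AddMonoid M] {f : ℕ → M} {c : M}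
    {s t : ℕ} (hst : s ≤ t) (h : ∀ y, s ≤ y → y < t → f (y + 1) = f y + c) :
    f t = f s + (t - s) • c := by
  induction t, hst using Nat.le_induction with
  | base => simp
  | succ t hst ih =>
    rw [h t hst (by omega), ih fun y hy hyt => h y hy (by omega), Nat.sub_add_comm hst,
      succ_nsmul, add_assoc]

theorem exists_succ_ne_add_of_ne_add_nsmul {M : Type*} [AddMonoid M] {f : ℕ → M} {c : M}
    {s t : ℕ} (hst : s ≤ t) (hft : f t ≠ f s + (t - s) • c) :
    ∃ y, s ≤ y ∧ y < t ∧ f (y + 1) ≠ f y + c := by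
  by_contra! h
  exact hft (eq_add_nsmul_of_forall_succ_eq_add hst h)

theorem exists_mem_problems_between {M : Type*} [AddMonoid M] [DecidableEq M] {f : ℕ → M} {a s t : ℕ}
    (hs : 1 ≤ s) (hst : s ≤ t) (ht : t ≤ a) (hft : f t ≠ f s + (t - s) • f 1) :
    ∃ p ∈ (Icc 1 a).filter (fun x => f (x + 1) ≠ f x + f 1), s ≤ p ∧ p < t := by
  obtain ⟨y, hsy, hyt, hy⟩ := exists_succ_ne_add_of_ne_add_nsmul hst hft
  exact ⟨y, mem_filter.2 ⟨mem_Icc.2 ⟨by omega, by omega⟩, hy⟩, hsy, hyt⟩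

theorem zeros_force_problems_general (a : ℕ) (f : ℕ → ℚ)
    (h1 : f 1 ≠ 0) :
    (∀ x₁ x₂ : ℕ, x₁ ∈ (Finset.Icc 1 a).filter (fun x => f x = 0) →
      x₂ ∈ (Finset.Icc 1 a).filter (fun x => f x = 0) → x₁ < x₂ →
      ∃ x ∈ (Finset.Icc 1 a).filter (fun x => f (x + 1) ≠ f x + f 1),
        x₁ ≤ x ∧ x < x₂) ∧
    ((Finset.Icc 1 a).filter (fun x => f x = 0)).card ≤
      ((Finset.Icc 1 a).filter (fun x => f (x + 1) ≠ f x + f 1)).card := by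
  have hbetween : ∀ x₁ x₂, x₁ ∈ (Icc 1 a).filter (fun x => f x = 0) →
      x₂ ∈ (Icc 1 a).filter (fun x => f x = 0) → x₁ < x₂ →
      ∃ p ∈ (Icc 1 a).filter (fun x => f (x + 1) ≠ f x + f 1), x₁ ≤ p ∧ p < x₂ := by
    intro x₁ x₂ hx₁ hx₂ hlt
    obtain ⟨⟨hx₁, -⟩, hfx₁⟩ := by simpa only [mem_filter, mem_Icc] using hx₁
    obtain ⟨⟨-, hx₂⟩, hfx₂⟩ := by simpa only [mem_filter, mem_Icc] using hx₂
    refine exists_mem_problems_between (f := f) hx₁ hlt.le hx₂ ?_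
    simp [hfx₁, hfx₂, h1, Nat.sub_ne_zero_of_lt hlt]
  refine ⟨hbetween, card_le_card_of_interlaced (fun z hz => ?_) hbetween⟩
  obtain ⟨⟨hz, hza⟩, hfz⟩ := by simpa only [mem_filter, mem_Icc] using hz
  obtain ⟨p, hp, -, hpz⟩ := exists_mem_problems_between (f := f) le_rfl hz hza (by
    rw [hfz, ← succ_nsmul', Nat.sub_add_cancel hz]
    simp [h1, Nat.one_le_iff_ne_zero.1 hz])
  exact ⟨p, hp, hpz⟩

theorem zeros_force_problems (a : ℕ) (ha : 1 < a) (f : ℕ → ℚ)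
    (h1 : f 1 ≠ 0) :
    (∀ x₁ x₂ : ℕ, x₁ ∈ (Finset.Icc 1 a).filter (fun x => f x = 0) →
      x₂ ∈ (Finset.Icc 1 a).filter (fun x => f x = 0) → x₁ < x₂ →
      ∃ x ∈ (Finset.Icc 1 a).filter (fun x => f (x + 1) ≠ f x + f 1),
        x₁ ≤ x ∧ x < x₂) ∧
    ((Finset.Icc 1 a).filter (fun x => f x = 0)).card ≤
      ((Finset.Icc 1 a).filter (fun x => f (x + 1) ≠ f x + f 1)).card :=
  zeros_force_problems_general a f h1
end

section
/- Let Q be a torsion-free abelian group and suppose the Main Theorem holds over the rationals with constant C = C(c). Then for every c-quasihomomorphism f: Z -> Q^n we have w_H(f(x) - x*f(1)) <= C(c) for all x in Z. (Key step: if g: Z -> V^n is a map into powers of a Q-vector space V with w_H(g(y) - y*g(1)) > C for some y, then there is a Q-linear functional xi: V -> Q such that h = xi^n ∘ g satisfies w_H(h(y) - y*h(1)) > C, and h is a c-quasihomomorphism whenever g is.) -/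
/-- Applying a zero-preserving map coordinatewise does not increase Hamming weight. -/
lemma wH_comp_le {Q R : Type*} [Zero Q] [Zero R] {n : ℕ} (φ : Q → R) (hφ : φ 0 = 0)
    (v : Fin n → Q) : wH (fun i => φ (v i)) ≤ wH v := by
  have key : ∀ i : {i : Fin n // (fun j => φ (v j)) i ≠ 0}, v i.1 ≠ 0 :=
    fun i h => i.2 (by simp only [h, hφ])
  apply Nat.card_le_card_of_injective
    (fun i => (⟨i.1, key i⟩ : {i : Fin n // v i ≠ 0}))
  intro a b hab
  simpa [Subtype.ext_iff] using hab

/-- For a finite family of nonzero vectors in a vector space over an infinite field,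
there is a linear functional that does not vanish on any of them. -/
lemma exists_dual_ne_zero {K V : Type*} [Field K] [Infinite K] [AddCommGroup V] [Module K V]
    {ι : Type*} [Finite ι] (v : ι → V) (hv : ∀ i, v i ≠ 0) :
    ∃ ξ : V →ₗ[K] K, ∀ i, ξ (v i) ≠ 0 := by
  by_contra h
  push_neg at h
  have hcov : ⋃ i, ((LinearMap.ker (Module.Dual.eval K V (v i)) : Subspace K (Module.Dual K V)) :
      Set (Module.Dual K V)) = Set.univ := by
    ext ξ
    simp only [Set.mem_iUnion, Set.mem_univ, iff_true, SetLike.mem_coe, LinearMap.mem_ker]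
    obtain ⟨i, hi⟩ := h ξ
    exact ⟨i, hi⟩
  obtain ⟨i, hi⟩ := Subspace.exists_eq_top_of_iUnion_eq_univ hcov
  have : ∀ ξ : Module.Dual K V, ξ (v i) = 0 := by
    intro ξ
    have : ξ ∈ LinearMap.ker (Module.Dual.eval K V (v i)) := hi ▸ Submodule.mem_top
    simpa using this
  exact hv i ((Module.forall_dual_apply_eq_zero_iff K (v i)).mp this)

theorem main_theorem_torsion_free {Q : Type*} [AddCommGroup Q]
    (htf : ∀ (m : ℤ) (h : Q), m ≠ 0 → m • h = 0 → h = 0)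
    (c C : ℕ)
    (hmain : ∀ (n : ℕ) (g : ℤ → Fin n → ℚ),
      (∀ x y : ℤ, wH (g (x + y) - g x - g y) ≤ c) →
      ∀ x : ℤ, wH (g x - x • g 1) ≤ C)
    {n : ℕ} (f : ℤ → Fin n → Q)
    (hf : ∀ x y : ℤ, wH (f (x + y) - f x - f y) ≤ c) :
    ∀ x : ℤ, wH (f x - x • f 1) ≤ C := by
  intro x₀
  by_contra hC
  push_neg at hC
  set v : Fin n → Q := f x₀ - x₀ • f 1 with hv
  -- the localization of Q at the nonzero integers, a vector space over K = FractionRing ℤ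
  set K := FractionRing ℤ
  set V := LocalizedModule (nonZeroDivisors ℤ) Q
  have : Infinite K := Infinite.of_injective (algebraMap ℤ K) (IsFractionRing.injective ℤ K)
  let ι : Q →ₗ[ℤ] V := LocalizedModule.mkLinearMap (nonZeroDivisors ℤ) Q
  have hι : ∀ q : Q, q ≠ 0 → ι q ≠ 0 := by
    intro q hq h0
    have h0' : LocalizedModule.mk q (1 : nonZeroDivisors ℤ) =
        LocalizedModule.mk (0 : Q) (1 : nonZeroDivisors ℤ) := by
      simpa [ι, LocalizedModule.mkLinearMap, LocalizedModule.zero_mk] using h0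
    obtain ⟨u, hu⟩ := LocalizedModule.mk_eq.mp h0'
    simp only [one_smul, smul_zero] at hu
    exact hq (htf u q (nonZeroDivisors.coe_ne_zero u) hu)
  -- choose a functional not vanishing on the images of the nonzero coordinates of v
  obtain ⟨ξ, hξ⟩ := exists_dual_ne_zero (K := K) (V := V)
    (fun i : {i : Fin n // v i ≠ 0} => ι (v i)) (fun i => hι _ i.2)
  let e := FractionRing.algEquiv ℤ ℚ
  let φ : Q →+ ℚ := (e.toAddEquiv.toAddMonoidHom).comp
    ((ξ.toAddMonoidHom).comp (ι.toAddMonoidHom))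
  -- the composed quasihomomorphism into ℚ
  set g : ℤ → Fin n → ℚ := fun x i => φ (f x i) with hg
  have hgq : ∀ x y : ℤ, wH (g (x + y) - g x - g y) ≤ c := by
    intro x y
    have : g (x + y) - g x - g y = fun i => φ ((f (x + y) - f x - f y) i) := by
      funext i
      simp [hg, map_sub]
    rw [this]
    exact le_trans (wH_comp_le φ (map_zero φ) _) (hf x y)
  have hgx := hmain n g hgq x₀
  have hgv : g x₀ - x₀ • g 1 = fun i => φ (v i) := by
    funext i
    simp [hg, hv, map_sub, AddMonoidHom.map_zsmul]
  rw [hgv] at hgx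
  -- but the composed map has Hamming weight > C at x₀
  have hle : wH v ≤ wH (fun i => φ (v i)) := by
    apply Nat.card_le_card_of_injective
      (fun i : {i : Fin n // v i ≠ 0} =>
        (⟨i.1, by
          intro h0
          apply hξ i
          have : e (ξ (ι (v i.1))) = 0 := h0
          simpa using (map_eq_zero_iff e e.injective).mp this⟩ :
          {i : Fin n // (fun j => φ (v j)) i ≠ 0}))
    intro a b hab
    simpa [Subtype.ext_iff] using hab
  omega
end

section
/- For an odd integer a = 2k+1, let A = Z/aZ and define f: A -> Z by sending each class to its representative in {-k,...,k}. Then the zero set Z(f) has exactly one element, and the problem set P(f) = {(x,y) in A x A : f(x+y) != f(x) + f(y)} has cardinality exactly k*(k+1). -/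
/-!
The hypotheses force `f = ZMod.valMinAbs`. Since `f (x + y) ≡ f x + f y`, the two agree exactly
when `f x + f y` lies in `[-k, k]`, so `f × f` identifies `P(f)` with the pairs `(u, v) ∈ [-k, k]²`
whose sum leaves `[-k, k]`. For fixed `u` there are `|u|` such `v`, and `∑_{|u| ≤ k} |u| = k (k + 1)`.
-/

open Finset

namespace Int

lemma mul_two_mem_Ioc_iff {k : ℕ} (y : ℤ) :
    y * 2 ∈ Set.Ioc (-((2 * k + 1 : ℕ) : ℤ)) ((2 * k + 1 : ℕ) : ℤ) ↔ y ∈ Icc (-(k : ℤ)) k := by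
  simp only [Set.mem_Ioc, mem_Icc]
  omega

lemma sum_natAbs_Icc_neg_self (k : ℕ) : ∑ u ∈ Icc (-(k : ℤ)) k, u.natAbs = k * (k + 1) := by
  induction k with
  | zero => simp
  | succ k ih =>
    have hIcc : Icc (-((k + 1 : ℕ) : ℤ)) ((k + 1 : ℕ) : ℤ) =
        insert (-((k : ℤ) + 1)) (insert ((k : ℤ) + 1) (Icc (-(k : ℤ)) k)) := by
      ext v; simp only [mem_Icc, mem_insert]; omega
    rw [hIcc, sum_insert (by simp only [mem_insert, mem_Icc]; omega),
      sum_insert (by simp only [mem_Icc]; omega), ih, show (-((k : ℤ) + 1)).natAbs = k + 1 by omega, show ((k : ℤ) + 1).natAbs = k + 1 by omega]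
    ring

lemma card_filter_add_notMem_Icc_neg_self_of_mem {k : ℕ} {u : ℤ} (hu : u ∈ Icc (-(k : ℤ)) k) :
    #{v ∈ Icc (-(k : ℤ)) k | u + v ∉ Icc (-(k : ℤ)) k} = u.natAbs := by
  rw [mem_Icc] at hu
  rcases le_or_gt 0 u with hu₀ | hu₀
  · have : {v ∈ Icc (-(k : ℤ)) k | u + v ∉ Icc (-(k : ℤ)) k} = Icc (k - u + 1) k := by
      ext v; simp only [mem_filter, mem_Icc]; omega
    rw [this, Int.card_Icc]; omega
  · have : {v ∈ Icc (-(k : ℤ)) k | u + v ∉ Icc (-(k : ℤ)) k} = Icc (-(k : ℤ)) (-k - u - 1) := by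
      ext v; simp only [mem_filter, mem_Icc]; omega
    rw [this, Int.card_Icc]; omega

lemma card_filter_add_notMem_Icc_neg_self (k : ℕ) :
    #{p ∈ Icc (-(k : ℤ)) k ×ˢ Icc (-(k : ℤ)) k | p.1 + p.2 ∉ Icc (-(k : ℤ)) k} = k * (k + 1) := by
  rw [card_filter, sum_product, ← sum_natAbs_Icc_neg_self]
  refine sum_congr rfl fun u hu => ?_
  rw [← card_filter, card_filter_add_notMem_Icc_neg_self_of_mem hu]

end Int

namespace ZMod

lemma natCard_valMinAbs_eq_zero (n : ℕ) : Nat.card {x : ZMod n // x.valMinAbs = 0} = 1 := by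
  simp only [valMinAbs_eq_zero, Nat.card_unique]

lemma valMinAbs_add_eq_iff {n : ℕ} [NeZero n] (x y : ZMod n) :
    (x + y).valMinAbs = x.valMinAbs + y.valMinAbs ↔
      (x.valMinAbs + y.valMinAbs) * 2 ∈ Set.Ioc (-n : ℤ) n := by
  rw [valMinAbs_spec]
  simp [coe_valMinAbs]

section Odd

variable {k : ℕ}

lemma valMinAbs_eq_iff_of_odd (x : ZMod (2 * k + 1)) (y : ℤ) :
    x.valMinAbs = y ↔ x = y ∧ y ∈ Icc (-(k : ℤ)) k := by
  rw [valMinAbs_spec, Int.mul_two_mem_Ioc_iff]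

lemma valMinAbs_mem_Icc (x : ZMod (2 * k + 1)) : x.valMinAbs ∈ Icc (-(k : ℤ)) k :=
  ((valMinAbs_eq_iff_of_odd x _).1 rfl).2

lemma valMinAbs_intCast_of_mem_Icc {y : ℤ} (hy : y ∈ Icc (-(k : ℤ)) k) :
    (y : ZMod (2 * k + 1)).valMinAbs = y :=
  (valMinAbs_eq_iff_of_odd _ y).2 ⟨rfl, hy⟩

lemma valMinAbs_add_ne_iff_of_odd (x y : ZMod (2 * k + 1)) :
    (x + y).valMinAbs ≠ x.valMinAbs + y.valMinAbs ↔
      x.valMinAbs + y.valMinAbs ∉ Icc (-(k : ℤ)) k := by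
  rw [Ne, valMinAbs_add_eq_iff, Int.mul_two_mem_Ioc_iff]

lemma natCard_valMinAbs_add_ne (k : ℕ) :
    Nat.card {p : ZMod (2 * k + 1) × ZMod (2 * k + 1) //
      (p.1 + p.2).valMinAbs ≠ p.1.valMinAbs + p.2.valMinAbs} = k * (k + 1) := by
  rw [Nat.card_eq_fintype_card, Fintype.card_subtype,
    ← Int.card_filter_add_notMem_Icc_neg_self k]
  refine card_nbij' (Prod.map valMinAbs valMinAbs) (Prod.map Int.cast Int.cast) ?_ ?_ ?_ ?_
  · rintro ⟨x, y⟩ h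
    exact mem_filter.2 ⟨mem_product.2 ⟨valMinAbs_mem_Icc x, valMinAbs_mem_Icc y⟩,
      (valMinAbs_add_ne_iff_of_odd x y).1 (mem_filter.1 h).2⟩
  · rintro ⟨u, v⟩ h
    obtain ⟨huv, hsum⟩ := mem_filter.1 h
    obtain ⟨hu, hv⟩ := mem_product.1 huv
    refine mem_filter.2 ⟨mem_univ _, (valMinAbs_add_ne_iff_of_odd _ _).2 ?_⟩
    rwa [Prod.map_fst, Prod.map_snd, valMinAbs_intCast_of_mem_Icc hu,
      valMinAbs_intCast_of_mem_Icc hv]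
  · rintro ⟨x, y⟩ -
    simp [coe_valMinAbs]
  · rintro ⟨u, v⟩ h
    simp_all [valMinAbs_intCast_of_mem_Icc]

end Odd

end ZMod

theorem sharpness_example (k : ℕ) (f : ZMod (2 * k + 1) → ℤ)
    (hf : ∀ x, f x ∈ Set.Icc (-(k : ℤ)) (k : ℤ) ∧ ((f x : ZMod (2 * k + 1)) = x)) :
    Nat.card {x : ZMod (2 * k + 1) // f x = 0} = 1 ∧
    Nat.card {p : ZMod (2 * k + 1) × ZMod (2 * k + 1) //
      f (p.1 + p.2) ≠ f p.1 + f p.2} = k * (k + 1) := by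
  obtain rfl : f = ZMod.valMinAbs := funext fun x =>
    ((ZMod.valMinAbs_eq_iff_of_odd x (f x)).2 ⟨(hf x).2.symm, by simpa using (hf x).1⟩).symm
  exact ⟨ZMod.natCard_valMinAbs_eq_zero _, ZMod.natCard_valMinAbs_add_ne k⟩
end

section
/- Define f: Z -> Q^n (n >= 3) by f(x) = (floor((2x+2)/5), floor((x+2)/5), alpha_x, 0, ..., 0), where alpha_x = 0 whenever 5 does not divide x (and alpha_x arbitrary otherwise). Then f is a 1-quasihomomorphism, i.e., w_H(f(x+y) - f(x) - f(y)) <= 1 for all x,y in Z. -/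
lemma wH_le_one_of_unique {Q : Type*} [Zero Q] {n : ℕ} (v : Fin n → Q) (i0 : Fin n)
    (h : ∀ i, i ≠ i0 → v i = 0) : wH v ≤ 1 := by
  have : Subsingleton {i : Fin n // v i ≠ 0} := by
    constructor
    rintro ⟨a, ha⟩ ⟨b, hb⟩
    have ha' : a = i0 := by by_contra h'; exact ha (h a h')
    have hb' : b = i0 := by by_contra h'; exact hb (h b h')
    simp [ha', hb']
  unfold wH
  rcases isEmpty_or_nonempty {i : Fin n // v i ≠ 0} with he | hne
  · simp [Nat.card_of_isEmpty]
  · have : Unique {i : Fin n // v i ≠ 0} := uniqueOfSubsingleton hne.some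
    simp [Nat.card_unique]

theorem example_one_quasihomomorphism {n : ℕ} (hn : 3 ≤ n) (f : ℤ → Fin n → ℚ)
    (h0 : ∀ x : ℤ, f x ⟨0, by omega⟩ = ((2 * x + 2).fdiv 5 : ℤ))
    (h1 : ∀ x : ℤ, f x ⟨1, by omega⟩ = ((x + 2).fdiv 5 : ℤ))
    (h2 : ∀ x : ℤ, ¬ (5 ∣ x) → f x ⟨2, by omega⟩ = 0)
    (hrest : ∀ (x : ℤ) (i : Fin n), 3 ≤ (i : ℕ) → f x i = 0) :
    ∀ x y : ℤ, wH (f (x + y) - f x - f y) ≤ 1 := by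
  intro x y
  set v := f (x + y) - f x - f y with hv
  have hfd : ∀ a : ℤ, a.fdiv 5 = a / 5 := fun a => Int.fdiv_eq_ediv_of_nonneg a (by norm_num)
  have hv0 : v ⟨0, by omega⟩ = (((2*(x+y)+2)/5 - (2*x+2)/5 - (2*y+2)/5 : ℤ) : ℚ) := by
    simp [hv, h0, hfd]
  have hv1 : v ⟨1, by omega⟩ = (((x+y+2)/5 - (x+2)/5 - (y+2)/5 : ℤ) : ℚ) := by
    simp [hv, h1, hfd]
  have hrest' : ∀ i : Fin n, 3 ≤ (i : ℕ) → v i = 0 := by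
    intro i hi
    simp [hv, hrest _ _ hi]
  by_cases h5 : 5 ∣ x ∨ 5 ∣ y ∨ 5 ∣ (x + y)
  · -- then coords 0 and 1 vanish
    have e0 : ((2*(x+y)+2)/5 - (2*x+2)/5 - (2*y+2)/5 : ℤ) = 0 := by omega
    have e1 : ((x+y+2)/5 - (x+2)/5 - (y+2)/5 : ℤ) = 0 := by omega
    apply wH_le_one_of_unique v ⟨2, by omega⟩
    intro i hi
    by_cases h3 : 3 ≤ (i : ℕ)
    · exact hrest' i h3
    · have : (i : ℕ) = 0 ∨ (i : ℕ) = 1 ∨ (i : ℕ) = 2 := by omega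
      rcases this with h | h | h
      · have : i = ⟨0, by omega⟩ := by ext; simpa using h
        rw [this, hv0, e0]; norm_num
      · have : i = ⟨1, by omega⟩ := by ext; simpa using h
        rw [this, hv1, e1]; norm_num
      · exact absurd (by ext; simpa using h) hi
  · push_neg at h5
    obtain ⟨hx, hy, hxy⟩ := h5
    have hv2 : v ⟨2, by omega⟩ = 0 := by
      simp [hv, h2 _ hx, h2 _ hy, h2 _ hxy]
    have : ((2*(x+y)+2)/5 - (2*x+2)/5 - (2*y+2)/5 : ℤ) = 0 ∨
           ((x+y+2)/5 - (x+2)/5 - (y+2)/5 : ℤ) = 0 := by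
      have hx5 : x % 5 = 1 ∨ x % 5 = 2 ∨ x % 5 = 3 ∨ x % 5 = 4 := by omega
      have hy5 : y % 5 = 1 ∨ y % 5 = 2 ∨ y % 5 = 3 ∨ y % 5 = 4 := by omega
      rcases hx5 with h | h | h | h <;> rcases hy5 with h' | h' | h' | h' <;> omega
    rcases this with e | e
    · apply wH_le_one_of_unique v ⟨1, by omega⟩
      intro i hi
      by_cases h3 : 3 ≤ (i : ℕ)
      · exact hrest' i h3
      · have : (i : ℕ) = 0 ∨ (i : ℕ) = 1 ∨ (i : ℕ) = 2 := by omega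
        rcases this with h | h | h
        · have : i = ⟨0, by omega⟩ := by ext; simpa using h
          rw [this, hv0, e]; norm_num
        · exact absurd (by ext; simpa using h) hi
        · have : i = ⟨2, by omega⟩ := by ext; simpa using h
          rw [this]; exact hv2
    · apply wH_le_one_of_unique v ⟨0, by omega⟩
      intro i hi
      by_cases h3 : 3 ≤ (i : ℕ)
      · exact hrest' i h3
      · have : (i : ℕ) = 0 ∨ (i : ℕ) = 1 ∨ (i : ℕ) = 2 := by omega
        rcases this with h | h | h
        · exact absurd (by ext; simpa using h) hi
        · have : i = ⟨1, by omega⟩ := by ext; simpa using h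
          rw [this, hv1, e]; norm_num
        · have : i = ⟨2, by omega⟩ := by ext; simpa using h
          rw [this]; exact hv2
end
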